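/- For every positive integer n and every real x with 2 ≤ x < n, f_n(x) = −1, where f_n(x) = ∑_{k=1}^n μ(k)·ν(x/k). -/

import Mathlib

open ArithmeticFunction

noncomputable def nu (x : ℝ) : ℝ := 2 * Int.fract (x / 2) - Int.fract x

noncomputable def fn (n : ℕ) (x : ℝ) : ℝ :=
  ∑ k ∈ Finset.Icc 1 n, (moebius k : ℝ) * nu (x / k)

/-!
Writing `ν(y) = ⌊y⌋ - 2⌊y/2⌋`, the sum `f_n(x)` splits into
`∑ μ(k)⌊x/k⌋ - 2 ∑ μ(k)⌊(x/2)/k⌋`. For `1 ≤ y < n + 1` the identity `μ * ζ = 1` gives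
`∑_{k ≤ n} μ(k)⌊y/k⌋ = ∑_{j ≤ y} ∑_{k ∣ j} μ(k) = 1`, and both `x` and `x/2` lie in
that range, so `f_n(x) = 1 - 2 = -1`.
-/

open Finset
open scoped ArithmeticFunction.Moebius

lemma sum_Ioc_moebius_mul_div {R : Type*} [Ring R] {N : ℕ} (hN : 0 < N) :
    ∑ k ∈ Ioc 0 N, (μ k : R) * (N / k : ℕ) = 1 := by
  have h := sum_Ioc_mul_zeta_eq_sum (μ : ArithmeticFunction R) N
  simp only [coe_moebius_mul_coe_zeta, intCoe_apply] at h
  rw [← h, sum_eq_single_of_mem 1 (mem_Ioc.mpr ⟨one_pos, hN⟩)]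
  · exact one_one
  · exact fun k _ hk ↦ one_apply_ne hk

lemma sum_Icc_moebius_mul_div {R : Type*} [Ring R] {m n : ℕ} (hm : 0 < m) (hmn : m ≤ n) :
    ∑ k ∈ Icc 1 n, (μ k : R) * (m / k : ℕ) = 1 := by
  have hIcc : Icc 1 n = Ioc 0 n := Icc_add_one_left_eq_Ioc 0 n
  rw [← sum_Ioc_moebius_mul_div (R := R) hm, hIcc]
  refine (sum_subset (Ioc_subset_Ioc_right hmn) fun k hk hkm ↦ ?_).symm
  have : m < k := by simp_all
  simp [Nat.div_eq_of_lt this]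

lemma sum_Icc_moebius_mul_floor_div {n : ℕ} {x : ℝ} (hx : 1 ≤ x) (hxn : x < n + 1) :
    ∑ k ∈ Icc 1 n, (μ k : ℝ) * ⌊x / k⌋ = 1 := by
  have hx0 : 0 ≤ x := by linarith
  have hfloor_pos : 0 < ⌊x⌋₊ := Nat.floor_pos.mpr hx
  have hfloor_le : ⌊x⌋₊ ≤ n :=
    Nat.lt_succ_iff.mp <| (Nat.floor_lt hx0).mpr (by exact_mod_cast hxn)
  rw [← sum_Icc_moebius_mul_div (R := ℝ) hfloor_pos hfloor_le]
  refine sum_congr rfl fun k _ ↦ ?_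
  rw [Int.floor_div_natCast, ← Int.natCast_floor_eq_floor hx0, ← Int.natCast_div,
    Int.cast_natCast]

lemma nu_eq_floor_sub (y : ℝ) : nu y = ⌊y⌋ - 2 * ⌊y / 2⌋ := by
  rw [nu, Int.fract, Int.fract]
  ring

theorem stmt_12 : ∀ n : ℕ, 0 < n → ∀ x : ℝ, 2 ≤ x → x < n → fn n x = -1 := by
  intro n _ x hx2 hxn
  have hx : ∑ k ∈ Icc 1 n, (μ k : ℝ) * ⌊x / k⌋ = 1 :=
    sum_Icc_moebius_mul_floor_div (by linarith) (by linarith)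
  have hx_half : ∑ k ∈ Icc 1 n, (μ k : ℝ) * ⌊x / 2 / k⌋ = 1 :=
    sum_Icc_moebius_mul_floor_div (by linarith) (by linarith)
  calc fn n x
      = ∑ k ∈ Icc 1 n, (μ k : ℝ) * ⌊x / k⌋
          - 2 * ∑ k ∈ Icc 1 n, (μ k : ℝ) * ⌊x / 2 / k⌋ := by
        simp only [fn, nu_eq_floor_sub, mul_sum, ← sum_sub_distrib, div_right_comm x _ (2 : ℝ)]
        exact sum_congr rfl fun _ _ ↦ by ring
    _ = -1 := by rw [hx, hx_half]; norm_num
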